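/- For all n ≥ 0, the singular words satisfy w_{n+1} = w_{n-1} v_{n-2} v_{n-1} = v_{n-1} v_{n-2} w_{n-1}. -/

import Mathlib

/-!
Let `ℓₙ` be `a` for odd and `b` for even `n`; it is the last letter of `sₙ₋₁`. With `S = sₙ`,
`A = sₙ₋₁` without its last letter, `q = dₙ₊₁ - 1` and `ℓ = ℓₙ₋₁ = ℓₙ₊₁`, the singular words
around index `n` are conjugates of powers of `S`: `wₙ₊₁ = ℓ S^(q+1) A`, `wₙ₋₁ = ℓ A` and
`vₙ₋₁ = ℓ S^q A`, while `A vₙ₋₂ ℓ = S` by unfolding `sₙ = sₙ₋₁^dₙ sₙ₋₂` once. The two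
decompositions are the splittings `S^(q+1) = S · S^q = S^q · S`.
-/
/-- Letters: `a` is `false`, `b` is `true`. -/
abbrev Word := List Bool

/-- `wpow w k` is the `k`-fold concatenation `w^k`. -/
def wpow (w : Word) (k : ℕ) : Word := (List.replicate k w).flatten

open List

lemma wpow_succ (w : Word) (k : ℕ) : wpow w (k + 1) = w ++ wpow w k := by
  simp [wpow, replicate_succ]

lemma wpow_succ' (w : Word) (k : ℕ) : wpow w (k + 1) = wpow w k ++ w := by
  simp [wpow, replicate_succ']

lemma wpow_succ_decomposition (ℓ A S V : Word) (q : ℕ) (h : A ++ V ++ ℓ = S) :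
    ℓ ++ (wpow S (q + 1) ++ A) = (ℓ ++ A) ++ V ++ (ℓ ++ (wpow S q ++ A)) ∧
      ℓ ++ (wpow S (q + 1) ++ A) = (ℓ ++ (wpow S q ++ A)) ++ V ++ (ℓ ++ A) := by
  subst h
  exact ⟨by simp [wpow_succ], by simp [wpow_succ']⟩

def parityLetter (n : ℤ) : Word := if Odd n then [false] else [true]

lemma parityLetter_add_two (n : ℤ) : parityLetter (n + 2) = parityLetter n := by
  simp [parityLetter, parity_simps]

lemma length_parityLetter (n : ℤ) : (parityLetter n).length = 1 := by
  unfold parityLetter; split_ifs <;> rfl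

lemma dropLast_append_parityLetter (x : Word) (n : ℤ) : (x ++ parityLetter n).dropLast = x := by
  unfold parityLetter; split_ifs <;> exact dropLast_concat

section StandardAndSingularWords

variable {d : ℤ → ℕ} {s : ℤ → Word} (hd : ∀ n : ℤ, 1 ≤ n → 1 ≤ d n)
  (hs1 : s (-1) = [true]) (hs0 : s 0 = [false])
  (hs : ∀ n : ℤ, 1 ≤ n → s n = wpow (s (n - 1)) (d n) ++ s (n - 2))

include hs in
lemma standard_add_two {m : ℤ} (hm : -1 ≤ m) :
    s (m + 2) = wpow (s (m + 1)) (d (m + 2)) ++ s m := by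
  simpa [add_sub_assoc] using hs (m + 2) (by omega)

include hs1 hs0 hs in
lemma parityLetter_suffix_standard {m : ℤ} (hm : -1 ≤ m) : parityLetter (m + 1) <:+ s m := by
  suffices h : ∀ m (hm : -1 ≤ m),
      parityLetter (m + 1) <:+ s m ∧ parityLetter (m + 1 + 1) <:+ s (m + 1) from (h m hm).1
  intro m hm
  induction m, hm using Int.leInduction with
  | base => simp [parityLetter, hs1, hs0]
  | succ m hm ih =>
    refine ⟨ih.2, ?_⟩
    rw [show m + 1 + 1 + 1 = m + 1 + 2 by ring, parityLetter_add_two,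
      show m + 1 + 1 = m + 2 by ring, standard_add_two hs hm]
    exact ih.1.trans (suffix_append _ _)

include hs1 hs0 hs in
lemma standard_ne_nil {m : ℤ} (hm : -1 ≤ m) : s m ≠ [] := fun h => by
  simpa [h, length_parityLetter] using (parityLetter_suffix_standard hs1 hs0 hs hm).length_le

include hs1 hs0 hs in
lemma dropLast_standard_append_parityLetter {m : ℤ} (hm : -1 ≤ m) :
    (s m).dropLast ++ parityLetter (m + 1) = s m := by
  obtain ⟨t, ht⟩ := parityLetter_suffix_standard hs1 hs0 hs hm
  rw [← ht, dropLast_append_parityLetter]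

variable {w : ℤ → Word}
  (hw : ∀ n : ℤ, 0 ≤ n → w n = parityLetter n ++ (s n).dropLast)
  (hwm1 : w (-1) = [false])
  {v : ℤ → Word}
  (hv : ∀ n : ℤ, -1 ≤ n →
    v n = parityLetter n ++ (wpow (s (n + 1)) (d (n + 2) - 1) ++ s n).dropLast)
  (hvm2 : v (-2) = [])

include hs1 hw hwm1 in
lemma singular_eq {m : ℤ} (hm : -1 ≤ m) : w m = parityLetter m ++ (s m).dropLast := by
  rcases hm.eq_or_lt with rfl | hm
  · simp [hwm1, hs1, parityLetter]
  · exact hw m (by omega)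

include hs1 hs0 hs hw in
lemma singular_add_two {m : ℤ} (hm : -1 ≤ m) :
    w (m + 2) = parityLetter m ++ (wpow (s (m + 1)) (d (m + 2)) ++ (s m).dropLast) := by
  rw [hw (m + 2) (by omega), parityLetter_add_two, standard_add_two hs hm,
    dropLast_append_of_ne_nil (standard_ne_nil hs1 hs0 hs hm)]

include hs1 hs0 hs hv in
lemma adjoining_eq {m : ℤ} (hm : -1 ≤ m) :
    v m = parityLetter m ++ (wpow (s (m + 1)) (d (m + 2) - 1) ++ (s m).dropLast) := by
  rw [hv m hm, dropLast_append_of_ne_nil (standard_ne_nil hs1 hs0 hs hm)]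

include hd hs1 hs0 hs hv hvm2 in
lemma dropLast_append_adjoining_append_parityLetter {m : ℤ} (hm : -2 ≤ m) :
    (s (m + 1)).dropLast ++ v m ++ parityLetter (m + 1) = s (m + 2) := by
  rcases hm.eq_or_lt with rfl | hm
  · simp [hvm2, hs1, hs0, parityLetter]
  have hm : -1 ≤ m := by omega
  obtain ⟨r, hr⟩ : ∃ r, d (m + 2) = r + 1 := Nat.exists_eq_add_one.mpr (hd (m + 2) (by omega))
  rw [adjoining_eq hs1 hs0 hs hv hm, standard_add_two hs hm, hr, Nat.add_sub_cancel, wpow_succ]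
  calc _ = ((s (m + 1)).dropLast ++ parityLetter (m + 1 + 1)) ++ wpow (s (m + 1)) r ++
        ((s m).dropLast ++ parityLetter (m + 1)) := by
        rw [show m + 1 + 1 = m + 2 by ring, parityLetter_add_two]; simp only [append_assoc]
    _ = _ := by
      rw [dropLast_standard_append_parityLetter hs1 hs0 hs (show -1 ≤ m + 1 by omega),
        dropLast_standard_append_parityLetter hs1 hs0 hs hm, append_assoc]

end StandardAndSingularWords

theorem singular_word_decomposition_general (d : ℤ → ℕ) (s : ℤ → Word)
    (hd : ∀ n : ℤ, 1 ≤ n → 1 ≤ d n)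
    (hs1 : s (-1) = [true]) (hs0 : s 0 = [false])
    (hs : ∀ n : ℤ, 1 ≤ n → s n = wpow (s (n - 1)) (d n) ++ s (n - 2))
    (w : ℤ → Word)
    (hw : ∀ n : ℤ, 0 ≤ n → w n = (if Odd n then [false] else [true]) ++ (s n).dropLast)
    (hwm1 : w (-1) = [false])
    (v : ℤ → Word)
    (hv : ∀ n : ℤ, -1 ≤ n → v n = (if Odd n then [false] else [true]) ++ (wpow (s (n + 1)) (d (n + 2) - 1) ++ s n).dropLast)
    (hvm2 : v (-2) = []) :
    ∀ n : ℤ, 0 ≤ n →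
      w (n + 1) = w (n - 1) ++ v (n - 2) ++ v (n - 1) ∧
      w (n + 1) = v (n - 1) ++ v (n - 2) ++ w (n - 1) := by
  intro n hn
  obtain ⟨q, hq⟩ : ∃ q, d (n + 1) = q + 1 := Nat.exists_eq_add_one.mpr (hd (n + 1) (by omega))
  have hw_next := singular_add_two hs1 hs0 hs hw (m := n - 1) (by omega)
  have hw_prev := singular_eq hs1 hw hwm1 (m := n - 1) (by omega)
  have hv_prev := adjoining_eq hs1 hs0 hs hv (m := n - 1) (by omega)
  have hgap := dropLast_append_adjoining_append_parityLetter hd hs1 hs0 hs hv hvm2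
    (m := n - 2) (by omega)
  rw [show n - 1 + 2 = n + 1 by ring, sub_add_cancel, hq] at hw_next
  rw [show n - 1 + 2 = n + 1 by ring, sub_add_cancel, hq, Nat.add_sub_cancel] at hv_prev
  rw [show n - 2 + 1 = n - 1 by ring, show n - 2 + 2 = n by ring] at hgap
  rw [hw_next, hw_prev, hv_prev]
  exact wpow_succ_decomposition _ _ _ _ q hgap

/-- For all `n ≥ 0`, `wₙ₊₁ = wₙ₋₁ vₙ₋₂ vₙ₋₁ = vₙ₋₁ vₙ₋₂ wₙ₋₁`. -/
theorem singular_word_decomposition (d : ℤ → ℕ) (s : ℤ → Word)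
    (hd : ∀ n : ℤ, 1 ≤ n → 1 ≤ d n)
    (hs1 : s (-1) = [true]) (hs0 : s 0 = [false])
    (hs : ∀ n : ℤ, 1 ≤ n → s n = wpow (s (n - 1)) (d n) ++ s (n - 2))
    (w : ℤ → Word)
    (hw : ∀ n : ℤ, 0 ≤ n → w n = (if Odd n then [false] else [true]) ++ (s n).dropLast)
    (hwm1 : w (-1) = [false]) (hwm2 : w (-2) = [])
    (v : ℤ → Word)
    (hv : ∀ n : ℤ, -1 ≤ n → v n = (if Odd n then [false] else [true]) ++ (wpow (s (n + 1)) (d (n + 2) - 1) ++ s n).dropLast)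
    (hvm2 : v (-2) = []) :
    ∀ n : ℤ, 0 ≤ n →
      w (n + 1) = w (n - 1) ++ v (n - 2) ++ v (n - 1) ∧
      w (n + 1) = v (n - 1) ++ v (n - 2) ++ w (n - 1) :=
  singular_word_decomposition_general d s hd hs1 hs0 hs w hw hwm1 v hv hvm2
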